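/- Let W ⊆ L²(Ω, H) be a closed subspace that is multiplicatively invariant with respect to all essentially bounded measurable functions Ω → ℂ, and let U : W → L²(Ω, H) be a bounded linear operator that is multiplication preserving with respect to all essentially bounded measurable functions. Then for every φ ∈ W, one has ‖(Uφ)(ω)‖_H ≤ ‖U‖ · ‖φ(ω)‖_H for a.e. ω ∈ Ω. (Pointwise norm inequality (2.6) in the proof of Theorem 2.2.) -/

import Mathlib

open MeasureTheory
open scoped ENNReal NNReal

/-- Pointwise multiplication of `φ ∈ L²(Ω, H)` by a scalar function `g : Ω → ℂ`
(defined when the product is again in `L²`, and junk `0` otherwise). -/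
noncomputable def smulL2 {Ω H : Type*} [MeasurableSpace Ω] {μ : Measure Ω}
    [NormedAddCommGroup H] [InnerProductSpace ℂ H]
    (g : Ω → ℂ) (φ : Lp H 2 μ) : Lp H 2 μ :=
  haveI := Classical.dec (MemLp (fun ω => g ω • (φ : Ω → H) ω) 2 μ)
  if h : MemLp (fun ω => g ω • (φ : Ω → H) ω) 2 μ then h.toLp _ else 0

set_option linter.unusedSectionVars false
section aux
variable {Ω H : Type*} [MeasurableSpace Ω] {μ : Measure Ω}
    [NormedAddCommGroup H] [InnerProductSpace ℂ H]

lemma smulL2_coeFn (g : Ω → ℂ) (φ : Lp H 2 μ)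
    (h : MemLp (fun ω => g ω • (φ : Ω → H) ω) 2 μ) :
    (smulL2 g φ : Ω → H) =ᵐ[μ] fun ω => g ω • (φ : Ω → H) ω := by
  unfold smulL2
  rw [dif_pos h]
  exact h.coeFn_toLp

lemma lint_sq (f : Lp H 2 μ) :
    ∫⁻ ω, (‖(f : Ω → H) ω‖₊ : ℝ≥0∞) ^ (2:ℝ) ∂μ = (‖f‖₊ : ℝ≥0∞) ^ (2:ℝ) := by
  have hn : (‖f‖₊ : ℝ≥0∞) = eLpNorm (f : Ω → H) 2 μ := by
    rw [Lp.nnnorm_def, ENNReal.coe_toNNReal (Lp.eLpNorm_ne_top f)]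
  have h : eLpNorm (f : Ω → H) 2 μ
      = (∫⁻ ω, (‖(f : Ω → H) ω‖₊ : ℝ≥0∞) ^ (2:ℝ) ∂μ) ^ (1/(2:ℝ)) := by
    rw [eLpNorm_eq_lintegral_rpow_enorm_toReal (by norm_num) (by norm_num)]
    norm_num
    rfl
  rw [hn, h, ← ENNReal.rpow_mul]
  norm_num

end aux

/-- **Pointwise norm inequality (2.6) in the proof of Theorem 2.2.** If `W ⊆ L²(Ω, H)` is a
closed subspace, multiplicatively invariant with respect to all essentially bounded
measurable functions, and `U : W → L²(Ω, H)` is a bounded linear operator that is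
multiplication preserving with respect to all essentially bounded measurable functions,
then `‖(Uφ)(ω)‖ ≤ ‖U‖ · ‖φ(ω)‖` for a.e. `ω`, for every `φ ∈ W`. -/
theorem translation_preserving_stmt4
    {Ω H : Type*} [MeasurableSpace Ω] (μ : Measure Ω) [SigmaFinite μ]
    [NormedAddCommGroup H] [InnerProductSpace ℂ H] [CompleteSpace H]
    [TopologicalSpace.SeparableSpace H]
    [TopologicalSpace.SeparableSpace (Lp ℂ 2 μ)]
    -- `W` is a closed subspace of `L²(Ω, H)`:
    (W : Submodule ℂ (Lp H 2 μ)) (hWclosed : IsClosed (W : Set (Lp H 2 μ)))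
    -- `W` is multiplicatively invariant with respect to all essentially bounded
    -- measurable functions:
    (hWinv : ∀ g : Ω → ℂ, Measurable g → (∃ C : ℝ, ∀ᵐ ω ∂μ, ‖g ω‖ ≤ C) →
      ∀ φ ∈ W, smulL2 g φ ∈ W)
    -- `U : W → L²(Ω, H)` is a bounded linear operator, multiplication preserving with
    -- respect to all essentially bounded measurable functions:
    (U : W →L[ℂ] Lp H 2 μ)
    (hU : ∀ g : Ω → ℂ, Measurable g → (∃ C : ℝ, ∀ᵐ ω ∂μ, ‖g ω‖ ≤ C) →
      ∀ φ : W, ∀ h : smulL2 g (φ : Lp H 2 μ) ∈ W,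
        U ⟨smulL2 g (φ : Lp H 2 μ), h⟩ = smulL2 g (U φ)) :
    -- then `‖(Uφ)(ω)‖ ≤ ‖U‖ * ‖φ(ω)‖` for a.e. `ω`, for every `φ ∈ W`:
    ∀ φ : W, ∀ᵐ ω ∂μ, ‖(U φ : Lp H 2 μ) ω‖ ≤ ‖U‖ * ‖(φ : Lp H 2 μ) ω‖ := by
  intro φ
  -- key set-integral inequality
  have key : ∀ s : Set Ω, MeasurableSet s → μ s < ∞ →
      ∫⁻ ω in s, (‖(U φ : Lp H 2 μ) ω‖₊ : ℝ≥0∞) ^ (2:ℝ) ∂μ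
        ≤ ∫⁻ ω in s, ((‖U‖₊ : ℝ≥0∞) * ‖(φ : Lp H 2 μ) ω‖₊) ^ (2:ℝ) ∂μ := by
    intro s hs hsfin
    set g : Ω → ℂ := s.indicator (fun _ => (1:ℂ)) with hg
    have hgmeas : Measurable g := measurable_const.indicator hs
    have hgbdd : ∀ ω, ‖g ω‖ ≤ 1 := by
      intro ω
      by_cases hω : ω ∈ s <;> simp [hg, Set.indicator_apply, hω]
    have hmem : ∀ f : Lp H 2 μ, MemLp (fun ω => g ω • (f : Ω → H) ω) 2 μ := by
      intro f
      refine (Lp.memLp f).of_le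
        ((hgmeas.aestronglyMeasurable).smul (Lp.aestronglyMeasurable f)) ?_
      filter_upwards with ω
      rw [norm_smul]
      calc ‖g ω‖ * ‖(f : Ω → H) ω‖ ≤ 1 * ‖(f : Ω → H) ω‖ :=
            mul_le_mul_of_nonneg_right (hgbdd ω) (norm_nonneg _)
        _ = ‖(f : Ω → H) ω‖ := one_mul _
    -- for any f, ∫⁻ over s of ‖f‖² equals the L² norm squared of g•f
    have hlint : ∀ f : Lp H 2 μ,
        ∫⁻ ω in s, (‖(f : Ω → H) ω‖₊ : ℝ≥0∞) ^ (2:ℝ) ∂μ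
          = (‖smulL2 g f‖₊ : ℝ≥0∞) ^ (2:ℝ) := by
      intro f
      rw [← lint_sq (smulL2 g f), ← lintegral_indicator hs]
      refine lintegral_congr_ae ?_
      filter_upwards [smulL2_coeFn g f (hmem f)] with ω hω
      classical
      rw [Set.indicator_apply]
      rw [hω]
      by_cases hωs : ω ∈ s <;>
        simp [hω, hg, Set.indicator_apply, hωs, ENNReal.zero_rpow_of_pos]
    have hWmem : smulL2 g (φ : Lp H 2 μ) ∈ W :=
      hWinv g hgmeas ⟨1, Filter.Eventually.of_forall hgbdd⟩ _ φ.2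
    have hUeq : smulL2 g (U φ : Lp H 2 μ) = U ⟨smulL2 g (φ : Lp H 2 μ), hWmem⟩ :=
      (hU g hgmeas ⟨1, Filter.Eventually.of_forall hgbdd⟩ φ hWmem).symm
    have hnorm : ‖smulL2 g (U φ : Lp H 2 μ)‖ ≤ ‖U‖ * ‖smulL2 g (φ : Lp H 2 μ)‖ := by
      rw [hUeq]
      exact (U.le_opNorm _).trans (le_of_eq rfl)
    have hnn : (‖smulL2 g (U φ : Lp H 2 μ)‖₊ : ℝ≥0∞)
        ≤ (‖U‖₊ : ℝ≥0∞) * (‖smulL2 g (φ : Lp H 2 μ)‖₊ : ℝ≥0∞) := by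
      rw [← ENNReal.coe_mul, ENNReal.coe_le_coe, ← NNReal.coe_le_coe]
      push_cast
      exact hnorm
    calc ∫⁻ ω in s, (‖(U φ : Lp H 2 μ) ω‖₊ : ℝ≥0∞) ^ (2:ℝ) ∂μ
        = (‖smulL2 g (U φ : Lp H 2 μ)‖₊ : ℝ≥0∞) ^ (2:ℝ) := hlint _
      _ ≤ ((‖U‖₊ : ℝ≥0∞) * (‖smulL2 g (φ : Lp H 2 μ)‖₊ : ℝ≥0∞)) ^ (2:ℝ) :=
          ENNReal.rpow_le_rpow hnn (by norm_num)
      _ = (‖U‖₊ : ℝ≥0∞) ^ (2:ℝ) * (‖smulL2 g (φ : Lp H 2 μ)‖₊ : ℝ≥0∞) ^ (2:ℝ) :=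
          ENNReal.mul_rpow_of_nonneg _ _ (by norm_num)
      _ = (‖U‖₊ : ℝ≥0∞) ^ (2:ℝ) * ∫⁻ ω in s, (‖(φ : Lp H 2 μ) ω‖₊ : ℝ≥0∞) ^ (2:ℝ) ∂μ := by
          rw [hlint]
      _ = ∫⁻ ω in s, (‖U‖₊ : ℝ≥0∞) ^ (2:ℝ) * (‖(φ : Lp H 2 μ) ω‖₊ : ℝ≥0∞) ^ (2:ℝ) ∂μ :=
          (lintegral_const_mul' _ _ (by simp)).symm
      _ = ∫⁻ ω in s, ((‖U‖₊ : ℝ≥0∞) * ‖(φ : Lp H 2 μ) ω‖₊) ^ (2:ℝ) ∂μ := by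
          simp_rw [ENNReal.mul_rpow_of_nonneg _ _ (by norm_num : (0:ℝ) ≤ 2)]
  have hmeas : AEMeasurable (fun ω => (‖(U φ : Lp H 2 μ) ω‖₊ : ℝ≥0∞) ^ (2:ℝ)) μ :=
    (Lp.aestronglyMeasurable (U φ)).enorm.pow aemeasurable_const
  have hae := ae_le_of_forall_setLIntegral_le_of_sigmaFinite₀ hmeas key
  filter_upwards [hae] with ω hω
  have h2 : (‖(U φ : Lp H 2 μ) ω‖₊ : ℝ≥0∞) ≤ (‖U‖₊ : ℝ≥0∞) * ‖(φ : Lp H 2 μ) ω‖₊ :=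
    (ENNReal.rpow_le_rpow_iff (by norm_num : (0:ℝ) < 2)).mp hω
  rw [← ENNReal.coe_mul, ENNReal.coe_le_coe, ← NNReal.coe_le_coe] at h2
  push_cast at h2
  exact h2
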